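/- Every maximal compatible family of arcs on a k-cycle contains a unique maximal arc containing all the others: fix k ≥ 2, define arcs on ℤ/kℤ and compatibility (nested or spaced) as follows: arcs are nonempty proper cyclic intervals of ℤ/kℤ, and arcs S, T are compatible if S ⊆ T, or T ⊆ S, or (S ∪ (S+1) ∪ (S−1)) ∩ T = ∅. If J is a family of pairwise compatible arcs that is maximal under inclusion, then J contains exactly one arc M of cardinality k − 1, and every arc S ∈ J satisfies S ⊆ M. -/

import Mathlib

/-!
Take a member `S` of `J` maximal under inclusion. Being a nonempty proper subset of the cycle,
`S` contains a point `x` with `x + 1 ∉ S`. Every other member of `J` either lies inside `S`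
(maximality rules out `S ⊊ T`) or is spaced from `S` and so misses `S + 1`; either way it avoids
`q = x + 1`. Hence the arc `{q}ᶜ` contains every member of `J`, is therefore compatible with all of
them, and belongs to `J` by maximality. It has `k - 1` elements, so any member of that size equals it.
-/

/-- A subset of `ZMod k` is an arc if it is nonempty, proper, and a cyclic
interval `{i, i+1, …, j}`. -/
def IsArc (k : ℕ) (S : Set (ZMod k)) : Prop :=
  S.Nonempty ∧ S ≠ Set.univ ∧
    ∃ (i : ZMod k) (t : ℕ), S = {x | ∃ m : ℕ, m ≤ t ∧ x = i + (m : ZMod k)}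

/-- Two arcs are compatible if they are nested or spaced. -/
def ArcCompatible (k : ℕ) (S T : Set (ZMod k)) : Prop :=
  S ⊆ T ∨ T ⊆ S ∨
    (S ∪ ((· + 1) '' S) ∪ ((· + (-1)) '' S)) ∩ T = ∅

/-- A maximal (under inclusion) family of pairwise compatible arcs. -/
def MaxCompatFamily (k : ℕ) (J : Set (Set (ZMod k))) : Prop :=
  (∀ S ∈ J, IsArc k S) ∧ (∀ S ∈ J, ∀ T ∈ J, ArcCompatible k S T) ∧
    ∀ J' : Set (Set (ZMod k)), (∀ S ∈ J', IsArc k S) →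
      (∀ S ∈ J', ∀ T ∈ J', ArcCompatible k S T) → J ⊆ J' → J' = J

namespace ZMod

variable {k : ℕ} [NeZero k]

theorem eq_univ_of_add_one_mem {S : Set (ZMod k)} (hS : S.Nonempty)
    (h : ∀ x ∈ S, x + 1 ∈ S) : S = Set.univ := by
  obtain ⟨x, hx⟩ := hS
  have hstep : ∀ n : ℕ, x + n ∈ S := by
    intro n
    induction n with
    | zero => simpa using hx
    | succ n ih => simpa [add_assoc] using h _ ih
  refine Set.eq_univ_of_forall fun y => ?_
  simpa [natCast_zmod_val] using hstep (y - x).val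

theorem exists_mem_add_one_notMem {S : Set (ZMod k)} (hS : S.Nonempty) (hS' : S ≠ Set.univ) :
    ∃ x ∈ S, x + 1 ∉ S := by
  by_contra! h
  exact hS' (eq_univ_of_add_one_mem hS h)

end ZMod

theorem isArc_compl_singleton {k : ℕ} (hk : 2 ≤ k) (q : ZMod k) :
    IsArc k ({q}ᶜ : Set (ZMod k)) := by
  have : NeZero k := ⟨by omega⟩
  have hsucc : ∀ m : ℕ, m + 1 < k → q + 1 + m ≠ q := fun m hm h => by
    have hdvd : k ∣ m + 1 := (ZMod.natCast_eq_zero_iff _ k).mp (by push_cast; linear_combination h)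
    exact absurd (Nat.le_of_dvd (by omega) hdvd) (by omega)
  refine ⟨⟨q + 1 + (0 : ℕ), hsucc 0 (by omega)⟩, Set.compl_ne_univ.mpr (Set.singleton_nonempty q),
    q + 1, k - 2, Set.ext fun x => ⟨fun hx => ?_, ?_⟩⟩
  · refine ⟨(x - (q + 1)).val, ?_, by rw [ZMod.natCast_zmod_val]; ring⟩
    by_contra! hlarge
    have hval : (x - (q + 1)).val = k - 1 := by have := ZMod.val_lt (x - (q + 1)); omega
    have hdiff : x - (q + 1) = -1 := by
      rw [← ZMod.natCast_zmod_val (x - (q + 1)), hval, Nat.cast_sub (by omega), ZMod.natCast_self,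
        Nat.cast_one, zero_sub]
    exact hx (show x = q by linear_combination hdiff)
  · rintro ⟨m, hm, rfl⟩
    exact hsucc m (by omega)

theorem ArcCompatible.notMem_of_add_one_mem {k : ℕ} {S T : Set (ZMod k)}
    (hST : ArcCompatible k S T) (hTS : S ⊆ T → T ⊆ S) {x : ZMod k} (hx : x ∈ S) (hx' : x + 1 ∉ S) :
    x + 1 ∉ T := by
  rcases hST with h | h | h
  · exact fun hT => hx' (hTS h hT)
  · exact fun hT => hx' (h hT)
  · exact fun hT => Set.eq_empty_iff_forall_notMem.mp h (x + 1) ⟨Or.inl (Or.inr ⟨x, hx, rfl⟩), hT⟩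

theorem exists_forall_notMem_of_pairwise_arcCompatible {k : ℕ} [NeZero k]
    {J : Set (Set (ZMod k))} (harc : ∀ S ∈ J, IsArc k S)
    (hcompat : ∀ S ∈ J, ∀ T ∈ J, ArcCompatible k S T) : ∃ q : ZMod k, ∀ T ∈ J, q ∉ T := by
  rcases J.eq_empty_or_nonempty with rfl | hne
  · exact ⟨0, by simp⟩
  obtain ⟨S, hSJ, hSmax⟩ := J.toFinite.exists_maximalFor id J hne
  obtain ⟨hS, hS', -⟩ := harc S hSJ
  obtain ⟨x, hx, hx'⟩ := ZMod.exists_mem_add_one_notMem hS hS'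
  exact ⟨x + 1, fun T hT =>
    (hcompat S hSJ T hT).notMem_of_add_one_mem (hSmax hT) hx hx'⟩

theorem MaxCompatFamily.mem_of_forall_subset {k : ℕ} {J : Set (Set (ZMod k))}
    (hJ : MaxCompatFamily k J) {M : Set (ZMod k)} (hM : IsArc k M) (hsub : ∀ S ∈ J, S ⊆ M) :
    M ∈ J := by
  obtain ⟨harc, hcompat, hmax⟩ := hJ
  have hins : insert M J = J := by
    refine hmax _ (by rintro S (rfl | hS); exacts [hM, harc S hS]) ?_ (Set.subset_insert M J)
    rintro S (rfl | hS) T (rfl | hT)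
    · exact Or.inl subset_rfl
    · exact Or.inr (Or.inl (hsub T hT))
    · exact Or.inl (hsub S hS)
    · exact hcompat S hS T hT
  exact hins ▸ Set.mem_insert M J

/-- Every maximal compatible family of arcs on a `k`-cycle contains a unique
maximal arc, of cardinality `k - 1`, containing all the others. -/
theorem maxCompatFamily_max_arc (k : ℕ) (hk : 2 ≤ k)
    (J : Set (Set (ZMod k))) (hJ : MaxCompatFamily k J) :
    ∃ M ∈ J, M.ncard = k - 1 ∧ (∀ S ∈ J, S ⊆ M) ∧
      ∀ M' ∈ J, M'.ncard = k - 1 → M' = M := by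
  have : NeZero k := ⟨by omega⟩
  obtain ⟨q, hq⟩ := exists_forall_notMem_of_pairwise_arcCompatible hJ.1 hJ.2.1
  have hsub : ∀ S ∈ J, S ⊆ {q}ᶜ := fun S hS x hx hxq => hq S hS (hxq ▸ hx)
  have hcard : ({q}ᶜ : Set (ZMod k)).ncard = k - 1 := by
    rw [Set.ncard_compl, Nat.card_zmod, Set.ncard_singleton]
  refine ⟨{q}ᶜ, hJ.mem_of_forall_subset (isArc_compl_singleton hk q) hsub, hcard, hsub,
    fun M' hM' hM'card => ?_⟩
  exact Set.eq_of_subset_of_ncard_le (hsub M' hM') (by rw [hM'card, hcard])
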